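/- arXiv:1810.03392 — 2 statements merged into one kernel-verified Lean document; each statement's English description precedes it below -/
import Mathlib

section
/- Let (X, d_M) be a complete separable metric space, let F be a measurable space, and for each z ∈ F let P_z be a probability measure on a measurable space (Ω, G). Suppose (K_n)_{n∈ℕ} is a sequence of measurable maps K_n : Ω → X such that for every z ∈ F there exists a measurable K^z : Ω → X with K_n → K^z in probability P_z. Assume moreover that z ↦ P_z(A) is measurable for every A ∈ G. Then, defining n_0(z) = 0 and n_k(z) = inf{m > n_{k-1}(z) : sup_{p,q ≥ m} P_z(d_M(K_p, K_q) > 2^{−k}) < 2^{−k}}, each n_k is a measurable function of z, and setting L^z(ω) = lim_k K_{n_k(z)}(ω) when the limit exists and L^z(ω) = x₀ (a fixed point) otherwise, one has: for every z ∈ F, L^z = K^z, P_z-almost surely. -/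
/-!
Convergence in probability implies Cauchy in probability, so the set defining `n (k + 1) z` is
nonempty; it is cut out by measurable conditions in `z`, and `n (k + 1)` is measurable as its
`Nat.find`. Letting `q → ∞` in the Cauchy bound at `m = n (k + 1) z` gives
`P z (2⁻ᵏ < dist (K m) (Klim z)) ≤ 2⁻ᵏ`, which is summable, so by Borel–Cantelli
`K (n k z) → Klim z` almost surely, and there `L z` is that limit.
-/

open MeasureTheory Filter
open scoped ENNReal

lemma measurable_sInf_setOf {F : Type*} [MeasurableSpace F] {p : F → ℕ → Prop}
    (hp : ∀ z, {m | p z m}.Nonempty) (hm : ∀ m, MeasurableSet {z | p z m}) :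
    Measurable fun z => sInf {m | p z m} := by
  classical
  simp_rw [Nat.sInf_def (hp _)]
  exact measurable_find hp hm

section ConvergenceInProbability

variable {Ω X : Type*} [MeasurableSpace Ω] [PseudoMetricSpace X] {μ : Measure Ω}

lemma measure_dist_gt_add_le (f g h : Ω → X) (c₁ c₂ : ℝ) :
    μ {ω | c₁ + c₂ < dist (f ω) (h ω)} ≤
      μ {ω | c₁ < dist (f ω) (g ω)} + μ {ω | c₂ < dist (g ω) (h ω)} := by
  refine (measure_mono fun ω hω => ?_).trans (measure_union_le _ _)
  by_contra hc
  simp only [Set.mem_union, Set.mem_ofPred_eq, not_or, not_lt] at hω hc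
  linarith [dist_triangle (f ω) (g ω) (h ω)]

variable {f : ℕ → Ω → X} {g : Ω → X}

def IsCauchyInMeasureFrom (μ : Measure Ω) (f : ℕ → Ω → X) (c : ℝ) (m : ℕ) : Prop :=
  (⨆ (p : ℕ) (q : ℕ) (_ : m ≤ p) (_ : m ≤ q), μ {ω | c < dist (f p ω) (f q ω)})
    < ENNReal.ofReal c

lemma IsCauchyInMeasureFrom.measure_le {c : ℝ} {m p q : ℕ} (h : IsCauchyInMeasureFrom μ f c m)
    (hp : m ≤ p) (hq : m ≤ q) :
    μ {ω | c < dist (f p ω) (f q ω)} ≤ ENNReal.ofReal c :=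
  (le_iSup₂_of_le p q (le_iSup₂_of_le (f := fun _ _ => μ _) hp hq le_rfl)).trans h.le

lemma measurableSet_setOf_isCauchyInMeasureFrom [MeasurableSpace X] [BorelSpace X]
    [SecondCountableTopology X] {F : Type*} [MeasurableSpace F] {P : F → Measure Ω}
    (hP : ∀ A : Set Ω, MeasurableSet A → Measurable fun z => P z A)
    (hf : ∀ m, Measurable (f m)) (c : ℝ) (m : ℕ) :
    MeasurableSet {z | IsCauchyInMeasureFrom (P z) f c m} :=
  measurableSet_lt (Measurable.iSup fun p => Measurable.iSup fun q => Measurable.iSup fun _ =>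
    Measurable.iSup fun _ => hP _ (measurableSet_lt measurable_const ((hf p).dist (hf q))))
    measurable_const

lemma eventually_isCauchyInMeasureFrom
    (hfg : ∀ ε > (0 : ℝ),
      Tendsto (fun m => μ {ω | ε < dist (f m ω) (g ω)}) atTop (nhds 0))
    {c : ℝ} (hc : 0 < c) :
    ∀ᶠ m in atTop, IsCauchyInMeasureFrom μ f c m := by
  obtain ⟨M, hM⟩ := ((hfg (c / 2) (by positivity)).eventually_lt_const
    (ENNReal.ofReal_pos.2 (by positivity : 0 < c / 4))).exists_forall_of_atTop
  refine eventually_atTop.2 ⟨M, fun m hm => ?_⟩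
  have hpq : ∀ p q, m ≤ p → m ≤ q →
      μ {ω | c < dist (f p ω) (f q ω)} ≤ ENNReal.ofReal (c / 2) := fun p q hp hq =>
    calc μ {ω | c < dist (f p ω) (f q ω)}
        = μ {ω | c / 2 + c / 2 < dist (f p ω) (f q ω)} := by rw [add_halves]
      _ ≤ μ {ω | c / 2 < dist (f p ω) (g ω)} + μ {ω | c / 2 < dist (f q ω) (g ω)} := by
        simpa only [dist_comm (g _)] using measure_dist_gt_add_le (f p) g (f q) _ _
      _ ≤ ENNReal.ofReal (c / 4) + ENNReal.ofReal (c / 4) :=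
        add_le_add (hM p (hm.trans hp)).le (hM q (hm.trans hq)).le
      _ = ENNReal.ofReal (c / 2) := by
        rw [← ENNReal.ofReal_add (by positivity) (by positivity)]
        ring_nf
  refine lt_of_le_of_lt (iSup₂_le fun p q => iSup₂_le fun hp hq => hpq p q hp hq) ?_
  exact (ENNReal.ofReal_lt_ofReal_iff hc).2 (half_lt_self hc)

lemma IsCauchyInMeasureFrom.measure_dist_gt_le {c : ℝ} {m : ℕ}
    (h : IsCauchyInMeasureFrom μ f c m)
    (hfg : ∀ ε > (0 : ℝ),
      Tendsto (fun m => μ {ω | ε < dist (f m ω) (g ω)}) atTop (nhds 0))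
    (hc : 0 < c) :
    μ {ω | c + c < dist (f m ω) (g ω)} ≤ ENNReal.ofReal c := by
  have hlim : Tendsto (fun q => ENNReal.ofReal c + μ {ω | c < dist (f q ω) (g ω)}) atTop
      (nhds (ENNReal.ofReal c)) := by
    simpa using tendsto_const_nhds.add (hfg c hc)
  refine ge_of_tendsto hlim ((eventually_ge_atTop m).mono fun q hq => ?_)
  exact (measure_dist_gt_add_le (f m) (f q) g c c).trans
    (add_le_add (h.measure_le le_rfl hq) le_rfl)

lemma ae_tendsto_of_summable_of_measure_dist_gt_le {ε : ℕ → ℝ} (hε : Summable ε)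
    (h : ∀ k, μ {ω | ε k < dist (f k ω) (g ω)} ≤ ENNReal.ofReal (ε k)) :
    ∀ᵐ ω ∂μ, Tendsto (fun k => f k ω) atTop (nhds (g ω)) := by
  have hsum : ∑' k, μ {ω | ε k < dist (f k ω) (g ω)} ≠ ∞ :=
    ne_top_of_le_ne_top (ENNReal.tsum_coe_ne_top_iff_summable.2 hε.toNNReal)
      (ENNReal.tsum_le_tsum h)
  filter_upwards [ae_eventually_notMem hsum] with ω hω
  exact tendsto_iff_dist_tendsto_zero.2 (squeeze_zero' (.of_forall fun _ => dist_nonneg)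
    (hω.mono fun k hk => not_lt.1 hk) hε.tendsto_atTop_zero)

end ConvergenceInProbability

theorem stmt5_general {X : Type*} [MetricSpace X] [TopologicalSpace.SeparableSpace X]
    [MeasurableSpace X] [BorelSpace X]
    {F : Type*} [MeasurableSpace F]
    {Ω : Type*} [MeasurableSpace Ω]
    (P : F → Measure Ω)
    (hPmeas : ∀ A : Set Ω, MeasurableSet A → Measurable fun z => P z A)
    (K : ℕ → Ω → X) (hK : ∀ m, Measurable (K m))
    (Klim : F → Ω → X)
    (hconv : ∀ z, ∀ ε > (0 : ℝ),
      Tendsto (fun m => P z {ω | ε < dist (K m ω) (Klim z ω)}) atTop (nhds 0))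
    (n : ℕ → F → ℕ)
    (hn0 : ∀ z, n 0 z = 0)
    (hnk : ∀ k z, n (k + 1) z = sInf {m : ℕ | n k z < m ∧
      (⨆ (p : ℕ) (q : ℕ) (_ : m ≤ p) (_ : m ≤ q),
        P z {ω | (2 : ℝ)⁻¹ ^ (k + 1) < dist (K p ω) (K q ω)})
        < ENNReal.ofReal ((2 : ℝ)⁻¹ ^ (k + 1))})
    (L : F → Ω → X)
    (hL1 : ∀ z ω, (∃ x : X, Tendsto (fun k => K (n k z) ω) atTop (nhds x)) →
      Tendsto (fun k => K (n k z) ω) atTop (nhds (L z ω))) :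
    (∀ k, Measurable fun z => n k z) ∧
    (∀ z, ∀ᵐ ω ∂(P z), L z ω = Klim z ω) := by
  have hnk' : ∀ k z, n (k + 1) z =
      sInf {m | n k z < m ∧ IsCauchyInMeasureFrom (P z) K ((2 : ℝ)⁻¹ ^ (k + 1)) m} := hnk
  have hne : ∀ k z,
      {m | n k z < m ∧ IsCauchyInMeasureFrom (P z) K ((2 : ℝ)⁻¹ ^ (k + 1)) m}.Nonempty :=
    fun k z => ((eventually_gt_atTop _).and
      (eventually_isCauchyInMeasureFrom (hconv z) (by positivity))).exists
  refine ⟨fun k => ?_, fun z => ?_⟩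
  · induction k with
    | zero => simpa only [hn0] using measurable_const
    | succ k ih =>
      rw [funext (hnk' k)]
      exact measurable_sInf_setOf (hne k) fun m =>
        (ih measurableSet_Iio).inter (measurableSet_setOf_isCauchyInMeasureFrom hPmeas hK _ m)
  · have hbound : ∀ k, P z {ω | (2 : ℝ)⁻¹ ^ k < dist (K (n (k + 1) z) ω) (Klim z ω)} ≤
        ENNReal.ofReal ((2 : ℝ)⁻¹ ^ k) := fun k => by
      have hcauchy := (Nat.sInf_mem (hne k z)).2
      rw [← hnk'] at hcauchy
      calc _ = P z {ω | (2 : ℝ)⁻¹ ^ (k + 1) + (2 : ℝ)⁻¹ ^ (k + 1) <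
              dist (K (n (k + 1) z) ω) (Klim z ω)} := by ring_nf
        _ ≤ ENNReal.ofReal ((2 : ℝ)⁻¹ ^ (k + 1)) :=
          hcauchy.measure_dist_gt_le (hconv z) (by positivity)
        _ ≤ ENNReal.ofReal ((2 : ℝ)⁻¹ ^ k) :=
          ENNReal.ofReal_le_ofReal (pow_le_pow_of_le_one (by norm_num) (by norm_num) k.le_succ)
    filter_upwards [ae_tendsto_of_summable_of_measure_dist_gt_le
      (summable_geometric_of_lt_one (by norm_num) (by norm_num)) hbound] with ω hω
    have htend := (tendsto_add_atTop_iff_nat (f := fun k => K (n k z) ω) 1).1 hω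
    exact tendsto_nhds_unique (hL1 z ω ⟨_, htend⟩) htend

theorem stmt5 {X : Type*} [MetricSpace X] [CompleteSpace X] [TopologicalSpace.SeparableSpace X]
    [MeasurableSpace X] [BorelSpace X]
    {F : Type*} [MeasurableSpace F]
    {Ω : Type*} [MeasurableSpace Ω]
    (P : F → Measure Ω) (hP : ∀ z, IsProbabilityMeasure (P z))
    (hPmeas : ∀ A : Set Ω, MeasurableSet A → Measurable fun z => P z A)
    (K : ℕ → Ω → X) (hK : ∀ m, Measurable (K m))
    (Klim : F → Ω → X) (hKlim : ∀ z, Measurable (Klim z))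
    (hconv : ∀ z, ∀ ε > (0 : ℝ),
      Tendsto (fun m => P z {ω | ε < dist (K m ω) (Klim z ω)}) atTop (nhds 0))
    (n : ℕ → F → ℕ)
    (hn0 : ∀ z, n 0 z = 0)
    (hnk : ∀ k z, n (k + 1) z = sInf {m : ℕ | n k z < m ∧
      (⨆ (p : ℕ) (q : ℕ) (_ : m ≤ p) (_ : m ≤ q),
        P z {ω | (2 : ℝ)⁻¹ ^ (k + 1) < dist (K p ω) (K q ω)})
        < ENNReal.ofReal ((2 : ℝ)⁻¹ ^ (k + 1))})
    (x₀ : X) (L : F → Ω → X)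
    (hL1 : ∀ z ω, (∃ x : X, Tendsto (fun k => K (n k z) ω) atTop (nhds x)) →
      Tendsto (fun k => K (n k z) ω) atTop (nhds (L z ω)))
    (hL2 : ∀ z ω, ¬ (∃ x : X, Tendsto (fun k => K (n k z) ω) atTop (nhds x)) →
      L z ω = x₀) :
    (∀ k, Measurable fun z => n k z) ∧
    (∀ z, ∀ᵐ ω ∂(P z), L z ω = Klim z ω) :=
  stmt5_general P hPmeas K hK Klim hconv n hn0 hnk L hL1
end

section
/- Let ρ(x) = (1+|x|²)^{−α} for some α > d/2, so that ∫_{ℝ^d} ρ(x) dx < ∞. Suppose p : ℝ^d × ℝ^d → [0,∞) satisfies the two-sided Gaussian (Aronson) bounds c₁ t^{−d/2} exp(−C₁|x−y|²/t) ≤ p_t(x,y) ≤ c₂ t^{−d/2} exp(−C₂|x−y|²/t) for some positive constants c₁, c₂, C₁, C₂ and fixed t > 0. Then there exist constants 0 < c ≤ C depending only on c₁, c₂, C₁, C₂, α, d, T such that for every nonnegative measurable ψ : ℝ^d → [0,∞) and t ∈ (0,T], c ∫_{ℝ^d} ψ(y) ρ(y) dy ≤ ∫_{ℝ^d} ∫_{ℝ^d}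 ψ(y) p_t(x,y) ρ(x) dy dx ≤ C ∫_{ℝ^d} ψ(y) ρ(y) dy. -/
/-!
By Tonelli the double integral equals `∫ ψ(y) J(y) dy` with `J(y) = ∫ p_t(x,y) ρ(x) dx`, so it
suffices to show `J(y) ≍ ρ(y)` uniformly in `t ∈ (0,T]`. Peetre's inequality
`ρ(x) ≤ (2(1+|x-y|²))^|α| ρ(y)` compares the weight at `x` and at `y`. For the upper bound the
polynomial factor is absorbed by half of the Gaussian `exp(-C₂|x-y|²/t)` (this uses `t ≤ T`), and
the remaining Gaussian integrates to a multiple of `t^{d/2}`, cancelling `t^{-d/2}`. For the lower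
bound one integrates only over the ball `|x-y| < √t`, whose volume is again a multiple of `t^{d/2}`.
-/

open MeasureTheory Set Real Metric Module

theorem one_add_norm_sq_le_two_mul {E : Type*} [SeminormedAddCommGroup E] (x y : E) :
    1 + ‖x‖ ^ 2 ≤ 2 * (1 + ‖x - y‖ ^ 2) * (1 + ‖y‖ ^ 2) := by
  have h : ‖x‖ ≤ ‖x - y‖ + ‖y‖ := norm_le_norm_sub_add x y
  nlinarith [norm_nonneg x, norm_nonneg y, norm_nonneg (x - y), sq_nonneg (‖x - y‖ - ‖y‖),
    mul_nonneg (sq_nonneg ‖x - y‖) (sq_nonneg ‖y‖)]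

/-- Peetre's inequality. -/
theorem one_add_norm_sq_rpow_le {E : Type*} [SeminormedAddCommGroup E] (s : ℝ) (x y : E) :
    (1 + ‖x‖ ^ 2) ^ s ≤ (2 * (1 + ‖x - y‖ ^ 2)) ^ |s| * (1 + ‖y‖ ^ 2) ^ s := by
  rcases le_or_gt 0 s with hs | hs
  · rw [abs_of_nonneg hs, ← mul_rpow (by positivity) (by positivity)]
    exact rpow_le_rpow (by positivity) (one_add_norm_sq_le_two_mul x y) hs
  · have h : ((2 * (1 + ‖x - y‖ ^ 2)) * (1 + ‖x‖ ^ 2)) ^ s ≤ (1 + ‖y‖ ^ 2) ^ s := by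
      refine rpow_le_rpow_of_nonpos (by positivity) ?_ hs.le
      simpa [norm_sub_rev] using one_add_norm_sq_le_two_mul y x
    rw [mul_rpow (by positivity) (by positivity)] at h
    rw [abs_of_neg hs, rpow_neg (by positivity), ← div_eq_inv_mul, le_div_iff₀' (by positivity)]
    exact h

theorem rpow_neg_abs_mul_le_one_add_norm_sq_rpow {E : Type*} [SeminormedAddCommGroup E] (s : ℝ)
    {R : ℝ} {x y : E} (h : ‖x - y‖ ^ 2 ≤ R) :
    (2 * (1 + R)) ^ (-|s|) * (1 + ‖y‖ ^ 2) ^ s ≤ (1 + ‖x‖ ^ 2) ^ s := by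
  have hR : 0 ≤ R := (sq_nonneg _).trans h
  rw [rpow_neg (by positivity), inv_mul_le_iff₀ (by positivity)]
  calc (1 + ‖y‖ ^ 2) ^ s ≤ (2 * (1 + ‖x - y‖ ^ 2)) ^ |s| * (1 + ‖x‖ ^ 2) ^ s := by
        simpa only [norm_sub_rev] using one_add_norm_sq_rpow_le s y x
    _ ≤ (2 * (1 + R)) ^ |s| * (1 + ‖x‖ ^ 2) ^ s := by gcongr

theorem exists_one_add_rpow_le_mul_exp {β c : ℝ} (hβ : 0 ≤ β) (hc : 0 < c) :
    ∃ K > 0, ∀ s, 0 ≤ s → (1 + s) ^ β ≤ K * exp (c * s) := by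
  set ε := c / (β + c)
  have hε : 0 < ε := by positivity
  have hεβ : ε * β ≤ c := by
    rw [div_mul_eq_mul_div, div_le_iff₀ (by positivity)]; nlinarith
  refine ⟨ε⁻¹ ^ β, by positivity, fun s hs => ?_⟩
  have hlin : 1 + s ≤ ε⁻¹ * exp (ε * s) := by
    rw [le_inv_mul_iff₀ hε]
    have hε1 : ε ≤ 1 := div_le_one_of_le₀ (by linarith) (by positivity)
    nlinarith [add_one_le_exp (ε * s)]
  calc (1 + s) ^ β ≤ (ε⁻¹ * exp (ε * s)) ^ β := rpow_le_rpow (by positivity) hlin hβ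
    _ = ε⁻¹ ^ β * exp (ε * β * s) := by
      rw [mul_rpow (by positivity) (exp_pos _).le, ← exp_mul]; ring_nf
    _ ≤ ε⁻¹ ^ β * exp (c * s) := by gcongr

theorem exists_one_add_rpow_mul_exp_le {β C T : ℝ} (hβ : 0 ≤ β) (hC : 0 < C) (hT : 0 < T) :
    ∃ K > 0, ∀ t ∈ Ioc 0 T, ∀ s, 0 ≤ s →
      (1 + s) ^ β * exp (-C * s / t) ≤ K * exp (-(C / (2 * t)) * s) := by
  obtain ⟨K, hK, hKexp⟩ := exists_one_add_rpow_le_mul_exp hβ (show 0 < C / (2 * T) by positivity)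
  refine ⟨K, hK, fun t ⟨ht, htT⟩ s hs => ?_⟩
  have hT' : C / (2 * T) * s ≤ C / (2 * t) * s := by gcongr
  have hsplit : -C * s / t = -(C / (2 * t)) * s - C / (2 * t) * s := by field_simp; ring
  calc (1 + s) ^ β * exp (-C * s / t) ≤ K * exp (C / (2 * T) * s) * exp (-C * s / t) := by
        gcongr; exact hKexp s hs
    _ ≤ K * exp (-(C / (2 * t)) * s) := by
        rw [mul_assoc, ← exp_add, hsplit]
        gcongr
        linarith

section Gaussian

variable {V : Type*} [NormedAddCommGroup V] [InnerProductSpace ℝ V] [FiniteDimensional ℝ V]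
  [MeasurableSpace V] [BorelSpace V]

theorem lintegral_ofReal_mul_exp_neg_mul_norm_sub_sq {a b : ℝ} (ha : 0 ≤ a) (hb : 0 < b) (y : V) :
    ∫⁻ x, ENNReal.ofReal (a * exp (-b * ‖x - y‖ ^ 2))
      = ENNReal.ofReal (a * (π / b) ^ (finrank ℝ V / 2 : ℝ)) := by
  have hint := GaussianFourier.integral_rexp_neg_mul_sq_norm (V := V) hb
  -- a nonintegrable function has Bochner integral `0`
  have hgauss : Integrable fun x : V => exp (-b * ‖x‖ ^ 2) :=
    Integrable.of_integral_ne_zero (by rw [hint]; positivity)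
  rw [lintegral_sub_right_eq_self (fun x => ENNReal.ofReal (a * exp (-b * ‖x‖ ^ 2))) y,
    ← ofReal_integral_eq_lintegral_ofReal (hgauss.const_mul a)
      (Filter.Eventually.of_forall fun x => by positivity), integral_const_mul, hint]


theorem exists_lintegral_gaussian_mul_weight_le {s T c C : ℝ} (hT : 0 < T) (hc : 0 ≤ c)
    (hC : 0 < C) :
    ∃ M, 0 ≤ M ∧ ∀ t ∈ Ioc 0 T, ∀ (y : V) (q : V → ℝ),
      (∀ x, q x ≤ c * t ^ (-(finrank ℝ V : ℝ) / 2) * exp (-C * ‖x - y‖ ^ 2 / t)) →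
      ∫⁻ x, ENNReal.ofReal (q x * (1 + ‖x‖ ^ 2) ^ s) ≤ ENNReal.ofReal (M * (1 + ‖y‖ ^ 2) ^ s) := by
  obtain ⟨K, hK, hKexp⟩ := exists_one_add_rpow_mul_exp_le (abs_nonneg s) hC hT
  set n : ℝ := (finrank ℝ V : ℝ)
  refine ⟨c * 2 ^ |s| * K * (2 * π / C) ^ (n / 2), by positivity, fun t ht y q hq => ?_⟩
  have ht0 := ht.1
  set a := c * 2 ^ |s| * K * (1 + ‖y‖ ^ 2) ^ s * t ^ (-n / 2)
  have hpt : ∀ x, q x * (1 + ‖x‖ ^ 2) ^ s ≤ a * exp (-(C / (2 * t)) * ‖x - y‖ ^ 2) := by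
    intro x
    set u := ‖x - y‖ ^ 2
    calc q x * (1 + ‖x‖ ^ 2) ^ s
        ≤ (c * t ^ (-n / 2) * exp (-C * u / t)) * ((2 * (1 + u)) ^ |s| * (1 + ‖y‖ ^ 2) ^ s) :=
          mul_le_mul (hq x) (one_add_norm_sq_rpow_le s x y) (by positivity) (by positivity)
      _ = c * 2 ^ |s| * (1 + ‖y‖ ^ 2) ^ s * t ^ (-n / 2) * ((1 + u) ^ |s| * exp (-C * u / t)) := by
          rw [mul_rpow (by norm_num) (by positivity)]; ring
      _ ≤ c * 2 ^ |s| * (1 + ‖y‖ ^ 2) ^ s * t ^ (-n / 2) * (K * exp (-(C / (2 * t)) * u)) :=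
          mul_le_mul_of_nonneg_left (hKexp t ht u (by positivity)) (by positivity)
      _ = a * exp (-(C / (2 * t)) * u) := by ring
  calc ∫⁻ x, ENNReal.ofReal (q x * (1 + ‖x‖ ^ 2) ^ s)
      ≤ ∫⁻ x, ENNReal.ofReal (a * exp (-(C / (2 * t)) * ‖x - y‖ ^ 2)) :=
        lintegral_mono fun x => ENNReal.ofReal_le_ofReal (hpt x)
    _ = ENNReal.ofReal (a * (π / (C / (2 * t))) ^ (n / 2)) :=
        lintegral_ofReal_mul_exp_neg_mul_norm_sub_sq (by positivity) (by positivity) y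
    _ = ENNReal.ofReal (c * 2 ^ |s| * K * (2 * π / C) ^ (n / 2) * (1 + ‖y‖ ^ 2) ^ s) := by
        rw [show π / (C / (2 * t)) = 2 * π / C * t by field_simp, mul_rpow (by positivity) ht0.le]
        simp only [a, neg_div, rpow_neg ht0.le]
        field_simp

theorem exists_le_lintegral_gaussian_mul_weight {s T c C : ℝ} (hT : 0 ≤ T) (hc : 0 < c)
    (hC : 0 < C) :
    ∃ m > 0, ∀ t ∈ Ioc 0 T, ∀ (y : V) (q : V → ℝ),
      (∀ x, c * t ^ (-(finrank ℝ V : ℝ) / 2) * exp (-C * ‖x - y‖ ^ 2 / t) ≤ q x) →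
      ENNReal.ofReal (m * (1 + ‖y‖ ^ 2) ^ s) ≤ ∫⁻ x, ENNReal.ofReal (q x * (1 + ‖x‖ ^ 2) ^ s) := by
  set n : ℝ := (finrank ℝ V : ℝ)
  set vB := (volume (ball (0 : V) 1)).toReal
  have hvB : 0 < vB :=
    ENNReal.toReal_pos (measure_ball_pos _ _ one_pos).ne' measure_ball_lt_top.ne
  refine ⟨c * exp (-C) * (2 * (1 + T)) ^ (-|s|) * vB, by positivity,
    fun t ⟨ht0, htT⟩ y q hq => ?_⟩
  set κ := c * t ^ (-n / 2) * exp (-C) * ((2 * (1 + T)) ^ (-|s|) * (1 + ‖y‖ ^ 2) ^ s)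
  have hpt : ∀ x ∈ ball y √t,
      ENNReal.ofReal κ ≤ ENNReal.ofReal (q x * (1 + ‖x‖ ^ 2) ^ s) := by
    intro x hx
    have hu : ‖x - y‖ ^ 2 ≤ t :=
      ((lt_sqrt (norm_nonneg _)).1 (mem_ball_iff_norm.1 hx)).le
    have hexp : exp (-C) ≤ exp (-C * ‖x - y‖ ^ 2 / t) := by
      rw [exp_le_exp, neg_mul, neg_div, neg_le_neg_iff, div_le_iff₀ ht0]
      gcongr
    have hw := rpow_neg_abs_mul_le_one_add_norm_sq_rpow s (hu.trans htT)
    apply ENNReal.ofReal_le_ofReal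
    calc κ ≤ (c * t ^ (-n / 2) * exp (-C * ‖x - y‖ ^ 2 / t)) * (1 + ‖x‖ ^ 2) ^ s :=
          mul_le_mul (by gcongr) hw (by positivity) (by positivity)
      _ ≤ q x * (1 + ‖x‖ ^ 2) ^ s := by gcongr; exact hq x
  calc ENNReal.ofReal (c * exp (-C) * (2 * (1 + T)) ^ (-|s|) * vB * (1 + ‖y‖ ^ 2) ^ s)
      = ENNReal.ofReal κ * volume (ball y √t) := by
        rw [Measure.addHaar_ball_of_pos _ y (sqrt_pos.2 ht0),
          ← ENNReal.ofReal_toReal (measure_ball_lt_top (x := (0 : V)) (r := 1)).ne,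
          ← ENNReal.ofReal_mul (by positivity), ← ENNReal.ofReal_mul (by positivity),
          ← rpow_natCast √t, ← rpow_div_two_eq_sqrt _ ht0.le]
        simp only [κ, vB, n, neg_div, rpow_neg ht0.le]
        congr 1
        field_simp
    _ = ∫⁻ _ in ball y √t, ENNReal.ofReal κ := (setLIntegral_const _ _).symm
    _ ≤ ∫⁻ x in ball y √t, ENNReal.ofReal (q x * (1 + ‖x‖ ^ 2) ^ s) :=
        setLIntegral_mono' measurableSet_ball hpt
    _ ≤ ∫⁻ x, ENNReal.ofReal (q x * (1 + ‖x‖ ^ 2) ^ s) := setLIntegral_le_lintegral _ _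

end Gaussian

theorem lintegral_lintegral_ofReal_mul_eq {X Y : Type*} [MeasurableSpace X] [MeasurableSpace Y]
    {μ : Measure X} {ν : Measure Y} [SFinite μ] [SFinite ν] {ψ : Y → ℝ} {k : X → Y → ℝ}
    {w : X → ℝ} (hψ : Measurable ψ) (hψ0 : ∀ y, 0 ≤ ψ y) (hk : Measurable (Function.uncurry k))
    (hw : Measurable w) :
    ∫⁻ x, ∫⁻ y, ENNReal.ofReal (ψ y * k x y * w x) ∂ν ∂μ
      = ∫⁻ y, ENNReal.ofReal (ψ y) * ∫⁻ x, ENNReal.ofReal (k x y * w x) ∂μ ∂ν := by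
  rw [lintegral_lintegral_swap (((hψ.comp measurable_snd).mul hk).mul
    (hw.comp measurable_fst)).ennreal_ofReal.aemeasurable]
  refine lintegral_congr fun y => ?_
  rw [← lintegral_const_mul' _ _ ENNReal.ofReal_ne_top]
  refine lintegral_congr fun x => ?_
  rw [mul_assoc, ENNReal.ofReal_mul (hψ0 y)]

theorem lintegral_ofReal_mul_ofReal_const_mul {Y : Type*} [MeasurableSpace Y] {ν : Measure Y}
    {ψ w : Y → ℝ} {m : ℝ} (hm : 0 ≤ m) (hψ0 : ∀ y, 0 ≤ ψ y) :
    ∫⁻ y, ENNReal.ofReal (ψ y) * ENNReal.ofReal (m * w y) ∂ν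
      = ENNReal.ofReal m * ∫⁻ y, ENNReal.ofReal (ψ y * w y) ∂ν := by
  rw [← lintegral_const_mul' _ _ ENNReal.ofReal_ne_top]
  refine lintegral_congr fun y => ?_
  rw [← ENNReal.ofReal_mul (hψ0 y), ← ENNReal.ofReal_mul hm, mul_left_comm]

theorem stmt7_general (d : ℕ) (α T : ℝ) (hT : 0 < T)
    (ρ : EuclideanSpace ℝ (Fin d) → ℝ)
    (hρ : ∀ x, ρ x = (1 + ‖x‖ ^ 2) ^ (-α))
    (c₁ c₂ C₁ C₂ : ℝ) (hc₁ : 0 < c₁) (hc₂ : 0 < c₂) (hC₁ : 0 < C₁) (hC₂ : 0 < C₂)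
    (p : ℝ → EuclideanSpace ℝ (Fin d) → EuclideanSpace ℝ (Fin d) → ℝ)
    (hpmeas : ∀ t, Measurable (Function.uncurry (p t)))
    (hbounds : ∀ t ∈ Set.Ioc (0 : ℝ) T, ∀ x y,
      c₁ * t ^ (-(d : ℝ) / 2) * Real.exp (-C₁ * ‖x - y‖ ^ 2 / t) ≤ p t x y ∧
      p t x y ≤ c₂ * t ^ (-(d : ℝ) / 2) * Real.exp (-C₂ * ‖x - y‖ ^ 2 / t)) :
    ∃ c C : ℝ, 0 < c ∧ c ≤ C ∧
      ∀ ψ : EuclideanSpace ℝ (Fin d) → ℝ, Measurable ψ → (∀ y, 0 ≤ ψ y) →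
        ∀ t ∈ Set.Ioc (0 : ℝ) T,
          ENNReal.ofReal c * (∫⁻ y, ENNReal.ofReal (ψ y * ρ y))
            ≤ ∫⁻ x, ∫⁻ y, ENNReal.ofReal (ψ y * p t x y * ρ x) ∧
          (∫⁻ x, ∫⁻ y, ENNReal.ofReal (ψ y * p t x y * ρ x))
            ≤ ENNReal.ofReal C * ∫⁻ y, ENNReal.ofReal (ψ y * ρ y) := by
  obtain rfl : ρ = fun x => (1 + ‖x‖ ^ 2) ^ (-α) := funext hρ
  have hd : (finrank ℝ (EuclideanSpace ℝ (Fin d)) : ℝ) = d := by simp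
  obtain ⟨m, hm, hlower⟩ := exists_le_lintegral_gaussian_mul_weight
    (V := EuclideanSpace ℝ (Fin d)) (s := -α) hT.le hc₁ hC₁
  obtain ⟨M, hM, hupper⟩ := exists_lintegral_gaussian_mul_weight_le
    (V := EuclideanSpace ℝ (Fin d)) (s := -α) hT hc₂.le hC₂
  simp only [hd] at hlower hupper
  refine ⟨m, max m M, hm, le_max_left _ _, fun ψ hψ hψ0 t ht => ?_⟩
  have hw : Measurable fun x : EuclideanSpace ℝ (Fin d) => (1 + ‖x‖ ^ 2) ^ (-α) := by
    fun_prop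
  rw [lintegral_lintegral_ofReal_mul_eq hψ hψ0 (hpmeas t) hw]
  constructor
  · rw [← lintegral_ofReal_mul_ofReal_const_mul hm.le hψ0]
    exact lintegral_mono fun y =>
      mul_le_mul_right (hlower t ht y (p t · y) fun x => (hbounds t ht x y).1) _
  · calc _ ≤ ∫⁻ y, ENNReal.ofReal (ψ y) * ENNReal.ofReal (M * (1 + ‖y‖ ^ 2) ^ (-α)) :=
          lintegral_mono fun y =>
            mul_le_mul_right (hupper t ht y (p t · y) fun x => (hbounds t ht x y).2) _
      _ = ENNReal.ofReal M * ∫⁻ y, ENNReal.ofReal (ψ y * (1 + ‖y‖ ^ 2) ^ (-α)) :=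
          lintegral_ofReal_mul_ofReal_const_mul hM hψ0
      _ ≤ _ := by gcongr; exact le_max_right _ _

theorem stmt7 (d : ℕ) (α T : ℝ) (hα : (d : ℝ) / 2 < α) (hT : 0 < T)
    (ρ : EuclideanSpace ℝ (Fin d) → ℝ)
    (hρ : ∀ x, ρ x = (1 + ‖x‖ ^ 2) ^ (-α))
    (c₁ c₂ C₁ C₂ : ℝ) (hc₁ : 0 < c₁) (hc₂ : 0 < c₂) (hC₁ : 0 < C₁) (hC₂ : 0 < C₂)
    (p : ℝ → EuclideanSpace ℝ (Fin d) → EuclideanSpace ℝ (Fin d) → ℝ)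
    (hpmeas : ∀ t, Measurable (Function.uncurry (p t)))
    (hbounds : ∀ t ∈ Set.Ioc (0 : ℝ) T, ∀ x y,
      c₁ * t ^ (-(d : ℝ) / 2) * Real.exp (-C₁ * ‖x - y‖ ^ 2 / t) ≤ p t x y ∧
      p t x y ≤ c₂ * t ^ (-(d : ℝ) / 2) * Real.exp (-C₂ * ‖x - y‖ ^ 2 / t)) :
    ∃ c C : ℝ, 0 < c ∧ c ≤ C ∧
      ∀ ψ : EuclideanSpace ℝ (Fin d) → ℝ, Measurable ψ → (∀ y, 0 ≤ ψ y) →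
        ∀ t ∈ Set.Ioc (0 : ℝ) T,
          ENNReal.ofReal c * (∫⁻ y, ENNReal.ofReal (ψ y * ρ y))
            ≤ ∫⁻ x, ∫⁻ y, ENNReal.ofReal (ψ y * p t x y * ρ x) ∧
          (∫⁻ x, ∫⁻ y, ENNReal.ofReal (ψ y * p t x y * ρ x))
            ≤ ENNReal.ofReal C * ∫⁻ y, ENNReal.ofReal (ψ y * ρ y) :=
  stmt7_general d α T hT ρ hρ c₁ c₂ C₁ C₂ hc₁ hc₂ hC₁ hC₂ p hpmeas hbounds
end
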